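/- arXiv:2206.05062 — 4 statements merged into one kernel-verified Lean document; each statement's English description precedes it below -/
import Mathlib

section
/- For all nonnegative integers n, m, p: P(n+m, m, p+1) = Σ_{k=0}^{⌊n/2⌋} Σ_{l=0}^{⌊m/2⌋} Q*(n−2k, m−2l, p) · P(k, l, p), where Q*(n,m,p) = Σ_{j=0}^{m} Q(n,j,p). -/
/-- `P n m p` : number of integer partitions of `n` into exactly `m` parts
with each part at most `p`. -/
def P (n m p : ℕ) : ℕ :=
  Fintype.card {π : n.Partition // π.parts.card = m ∧ ∀ i ∈ π.parts, i ≤ p}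

/-- `Q n m p` : number of integer partitions of `n` into exactly `m` distinct parts
with each part at most `p`. -/
def Q (n m p : ℕ) : ℕ :=
  Fintype.card {π : n.Partition // π.parts.card = m ∧ π.parts.Nodup ∧ ∀ i ∈ π.parts, i ≤ p}

/-- `Qstar n m p` : number of integer partitions of `n` into at most `m` distinct parts
with each part at most `p`. -/
def Qstar (n m p : ℕ) : ℕ := ∑ j ∈ Finset.range (m + 1), Q n j p

/-!
Subtracting 1 from each of the `m` parts of a partition of `n + m` into parts at most `p + 1`
and discarding the zeros gives a partition of `n` into at most `m` parts at most `p`. Any such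
partition `t` is uniquely `d + e + e` with `d` a partition into distinct parts: `d` consists of
the parts of odd multiplicity in `t` and `e` repeats each part half as often as `t`. If `e`
partitions `k` into `l` parts, then `d` partitions `n - 2k` into at most `m - 2l` distinct parts,
which gives the sum over `k` and `l`.
-/

namespace Multiset

variable {α : Type*} [DecidableEq α]

theorem filter_ne_add_replicate_count (t : Multiset α) (b : α) :
    t.filter (· ≠ b) + replicate (count b t) b = t := by
  conv_rhs => rw [← filter_add_not (· ≠ b) t]
  simp only [ne_eq, not_not, filter_eq']

theorem sum_filter_ne_zero {M : Type*} [AddCommMonoid M] [DecidableEq M] (t : Multiset M) :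
    (t.filter (· ≠ 0)).sum = t.sum := by
  conv_rhs => rw [← filter_ne_add_replicate_count t 0]
  rw [sum_add, sum_replicate, smul_zero, add_zero]

noncomputable def oddPart (t : Multiset α) : Multiset α :=
  Finsupp.toMultiset (t.toFinsupp.mapRange (· % 2) (Nat.zero_mod 2))

noncomputable def halfPart (t : Multiset α) : Multiset α :=
  Finsupp.toMultiset (t.toFinsupp.mapRange (· / 2) (Nat.zero_div 2))

@[simp]
theorem count_oddPart (t : Multiset α) (a : α) : count a t.oddPart = count a t % 2 := by
  simp [oddPart]

@[simp]
theorem count_halfPart (t : Multiset α) (a : α) : count a t.halfPart = count a t / 2 := by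
  simp [halfPart]

theorem nodup_oddPart (t : Multiset α) : t.oddPart.Nodup :=
  nodup_iff_count_le_one.2 fun a => by simp only [count_oddPart]; omega

theorem oddPart_add_halfPart_add_halfPart (t : Multiset α) :
    t.oddPart + t.halfPart + t.halfPart = t := by
  ext a; simp only [count_add, count_oddPart, count_halfPart]; omega

theorem oddPart_add_add {d : Multiset α} (hd : d.Nodup) (e : Multiset α) :
    (d + e + e).oddPart = d := by
  ext a; have := nodup_iff_count_le_one.1 hd a; simp only [count_add, count_oddPart]; omega

theorem halfPart_add_add {d : Multiset α} (hd : d.Nodup) (e : Multiset α) :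
    (d + e + e).halfPart = e := by
  ext a; have := nodup_iff_count_le_one.1 hd a; simp only [count_add, count_halfPart]; omega

@[simps]
noncomputable def oddHalfEquiv : Multiset α ≃ {d : Multiset α // d.Nodup} × Multiset α where
  toFun t := (⟨t.oddPart, t.nodup_oddPart⟩, t.halfPart)
  invFun x := x.1 + x.2 + x.2
  left_inv := oddPart_add_halfPart_add_halfPart
  right_inv := fun ⟨⟨d, hd⟩, e⟩ => by simp [oddPart_add_add hd, halfPart_add_add hd]

theorem sum_map_add_one (u : Multiset ℕ) : (u.map (· + 1)).sum = u.sum + card u := by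
  simp [sum_map_add]

theorem map_add_one_map_sub_one {s : Multiset ℕ} (hs : ∀ i ∈ s, 1 ≤ i) :
    (s.map (· - 1)).map (· + 1) = s := by
  rw [map_map]
  exact (map_congr rfl fun i hi => Nat.sub_add_cancel (hs i hi)).trans (map_id s)

theorem sum_map_sub_one_add_card {s : Multiset ℕ} (hs : ∀ i ∈ s, 1 ≤ i) :
    (s.map (· - 1)).sum + card s = s.sum := by
  conv_rhs => rw [← map_add_one_map_sub_one hs]
  rw [sum_map_add_one, card_map]

end Multiset

open Multiset

namespace BoundedPartition

def Parts (n m p : ℕ) :=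
  {s : Multiset ℕ // s.sum = n ∧ card s = m ∧ ∀ i ∈ s, 1 ≤ i ∧ i ≤ p}

def PartsLE (n m p : ℕ) :=
  {s : Multiset ℕ // s.sum = n ∧ card s ≤ m ∧ ∀ i ∈ s, 1 ≤ i ∧ i ≤ p}

def DistinctParts (n m p : ℕ) :=
  {s : Multiset ℕ // s.sum = n ∧ card s = m ∧ s.Nodup ∧ ∀ i ∈ s, 1 ≤ i ∧ i ≤ p}

def DistinctPartsLE (n m p : ℕ) :=
  {s : Multiset ℕ // s.sum = n ∧ card s ≤ m ∧ s.Nodup ∧ ∀ i ∈ s, 1 ≤ i ∧ i ≤ p}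

def partitionEquivParts (n m p : ℕ) :
    {π : n.Partition // π.parts.card = m ∧ ∀ i ∈ π.parts, i ≤ p} ≃ Parts n m p where
  toFun π := ⟨π.1.parts, π.1.parts_sum, π.2.1, fun i hi => ⟨π.1.parts_pos hi, π.2.2 i hi⟩⟩
  invFun s := ⟨⟨s.1, fun hi => (s.2.2.2 _ hi).1, s.2.1⟩, s.2.2.1, fun i hi => (s.2.2.2 i hi).2⟩

def partitionEquivDistinctParts (n m p : ℕ) :
    {π : n.Partition // π.parts.card = m ∧ π.parts.Nodup ∧ ∀ i ∈ π.parts, i ≤ p} ≃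
      DistinctParts n m p where
  toFun π := ⟨π.1.parts, π.1.parts_sum, π.2.1, π.2.2.1,
    fun i hi => ⟨π.1.parts_pos hi, π.2.2.2 i hi⟩⟩
  invFun s := ⟨⟨s.1, fun hi => (s.2.2.2.2 _ hi).1, s.2.1⟩, s.2.2.1, s.2.2.2.1,
    fun i hi => (s.2.2.2.2 i hi).2⟩

def distinctPartsLEEquivSigma (n m p : ℕ) :
    DistinctPartsLE n m p ≃ Σ j : Fin (m + 1), DistinctParts n j p where
  toFun s := ⟨⟨card s.1, Nat.lt_succ_of_le s.2.2.1⟩, ⟨s.1, s.2.1, rfl, s.2.2.2⟩⟩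
  invFun x := ⟨x.2.1, x.2.2.1, x.2.2.2.1.trans_le (Nat.le_of_lt_succ x.1.2), x.2.2.2.2⟩
  right_inv := by
    rintro ⟨⟨j, hj⟩, s, hsum, hcard, hs⟩
    cases hcard
    rfl

instance (n m p : ℕ) : Finite (Parts n m p) := .of_equiv _ (partitionEquivParts n m p)

instance (n m p : ℕ) : Finite (DistinctParts n m p) :=
  .of_equiv _ (partitionEquivDistinctParts n m p)

instance (n m p : ℕ) : Finite (DistinctPartsLE n m p) :=
  .of_equiv _ (distinctPartsLEEquivSigma n m p).symm

theorem P_eq_card (n m p : ℕ) : P n m p = Nat.card (Parts n m p) := by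
  rw [P, ← Nat.card_eq_fintype_card, Nat.card_congr (partitionEquivParts n m p)]

theorem Q_eq_card (n m p : ℕ) : Q n m p = Nat.card (DistinctParts n m p) := by
  rw [Q, ← Nat.card_eq_fintype_card, Nat.card_congr (partitionEquivDistinctParts n m p)]

theorem Qstar_eq_card (n m p : ℕ) : Qstar n m p = Nat.card (DistinctPartsLE n m p) := by
  rw [Nat.card_congr (distinctPartsLEEquivSigma n m p), Nat.card_sigma,
    Fin.sum_univ_eq_sum_range (fun j => Nat.card (DistinctParts n j p))]
  exact Finset.sum_congr rfl fun j _ => Q_eq_card n j p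

def shiftEquiv (n m p : ℕ) : Parts (n + m) m (p + 1) ≃ PartsLE n m p where
  toFun := fun ⟨s, hsum, hcard, hs⟩ => ⟨(s.map (· - 1)).filter (· ≠ 0), by
      have := sum_map_sub_one_add_card fun i hi => (hs i hi).1
      rw [sum_filter_ne_zero]
      omega,
    (card_le_card (filter_le _ _)).trans (card_map _ s ▸ hcard.le), fun i hi => by
      obtain ⟨hi, hi0⟩ := mem_filter.1 hi
      obtain ⟨j, hj, rfl⟩ := mem_map.1 hi
      have := hs j hj
      omega⟩
  invFun := fun ⟨t, hsum, hcard, ht⟩ => ⟨t.map (· + 1) + replicate (m - card t) 1, by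
      rw [sum_add, sum_map_add_one, sum_replicate, smul_eq_mul, mul_one]
      omega, by
      rw [card_add, card_map, card_replicate]
      omega, fun i hi => by
      rcases mem_add.1 hi with hi | hi
      · obtain ⟨j, hj, rfl⟩ := mem_map.1 hi
        have := ht j hj
        omega
      · rw [eq_of_mem_replicate hi]
        omega⟩
  left_inv := fun ⟨s, hsum, hcard, hs⟩ => by
    apply Subtype.ext
    set t := s.map (· - 1)
    have hsplit := filter_ne_add_replicate_count t 0
    have hk : m - card (t.filter (· ≠ 0)) = count 0 t := by
      have := congrArg card hsplit
      rw [card_add, card_replicate, card_map, hcard] at this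
      omega
    calc (t.filter (· ≠ 0)).map (· + 1) + replicate (m - card (t.filter (· ≠ 0))) 1
        = (t.filter (· ≠ 0) + replicate (count 0 t) 0).map (· + 1) := by
          rw [map_add, map_replicate, hk]
      _ = s := by rw [hsplit, map_add_one_map_sub_one fun i hi => (hs i hi).1]
  right_inv := fun ⟨t, hsum, hcard, ht⟩ => by
    apply Subtype.ext
    have hpos : ∀ i ∈ t, i ≠ 0 := fun i hi => by have := ht i hi; omega
    have hshift : (t.map (· + 1)).map (· - 1) = t := by simp [map_map]
    show ((t.map (· + 1) + replicate _ 1).map (· - 1)).filter (· ≠ 0) = t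
    rw [map_add, hshift, map_replicate, filter_add, filter_eq_self.2 hpos,
      filter_eq_nil.2 fun i hi => by simp [eq_of_mem_replicate hi], add_zero]

def OddHalfParts (n m p : ℕ) :=
  {x : {d : Multiset ℕ // d.Nodup} × Multiset ℕ //
    (x.1 : Multiset ℕ).sum + 2 * x.2.sum = n ∧ card (x.1 : Multiset ℕ) + 2 * card x.2 ≤ m ∧
      (∀ i ∈ (x.1 : Multiset ℕ), 1 ≤ i ∧ i ≤ p) ∧ ∀ i ∈ x.2, 1 ≤ i ∧ i ≤ p}

noncomputable def partsLEEquivOddHalfParts (n m p : ℕ) : PartsLE n m p ≃ OddHalfParts n m p :=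
  (oddHalfEquiv.symm.subtypeEquiv fun x => by
    simp only [oddHalfEquiv_symm_apply, add_assoc, sum_add, card_add, ← two_mul, mem_add, or_self,
      or_imp, forall_and]
    tauto).symm

def oddHalfPartsEquivSigma (n m p : ℕ) : OddHalfParts n m p ≃
    Σ kl : ↥(Finset.range (n / 2 + 1) ×ˢ Finset.range (m / 2 + 1)),
      DistinctPartsLE (n - 2 * kl.1.1) (m - 2 * kl.1.2) p × Parts kl.1.1 kl.1.2 p where
  toFun := fun ⟨⟨⟨d, hd⟩, e⟩, hsum, hcard, hd_mem, he_mem⟩ => by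
    dsimp only at hsum hcard
    exact ⟨⟨(e.sum, card e), Finset.mem_product.2 ⟨Finset.mem_range.2 (by omega),
      Finset.mem_range.2 (by omega)⟩⟩, ⟨d, by dsimp only; omega, by dsimp only; omega, hd, hd_mem⟩,
      ⟨e, rfl, rfl, he_mem⟩⟩
  invFun := fun ⟨⟨(k, l), hkl⟩, ⟨d, hsum, hcard, hd, hd_mem⟩, ⟨e, he_sum, he_card, he_mem⟩⟩ => by
    simp only [Finset.mem_product, Finset.mem_range] at hkl hsum hcard he_sum he_card
    exact ⟨⟨⟨d, hd⟩, e⟩, by dsimp only; omega, by dsimp only; omega, hd_mem, he_mem⟩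
  left_inv := fun ⟨⟨⟨_, _⟩, _⟩, _, _, _, _⟩ => rfl
  right_inv := by
    rintro ⟨⟨⟨k, l⟩, hkl⟩, ⟨d, hsum, hcard, hd, hd_mem⟩, ⟨e, he_sum, he_card, he_mem⟩⟩
    obtain rfl : e.sum = k := he_sum
    obtain rfl : card e = l := he_card
    rfl

end BoundedPartition

open BoundedPartition

theorem stmt_1 (n m p : ℕ) :
    P (n + m) m (p + 1) = ∑ k ∈ Finset.range (n / 2 + 1), ∑ l ∈ Finset.range (m / 2 + 1),
      Qstar (n - 2 * k) (m - 2 * l) p * P k l p := by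
  rw [P_eq_card, Nat.card_congr ((shiftEquiv n m p).trans ((partsLEEquivOddHalfParts n m p).trans
      (oddHalfPartsEquivSigma n m p))), Nat.card_sigma,
    Finset.sum_coe_sort (Finset.range (n / 2 + 1) ×ˢ Finset.range (m / 2 + 1))
      (fun kl => Nat.card (DistinctPartsLE (n - 2 * kl.1) (m - 2 * kl.2) p × Parts kl.1 kl.2 p)),
    Finset.sum_product]
  refine Finset.sum_congr rfl fun k _ => Finset.sum_congr rfl fun l _ => ?_
  rw [Nat.card_prod, Qstar_eq_card, P_eq_card]
end

section
/- For all nonnegative integers n, m, p: Q(n,m,p) = Σ_{k=0}^{⌊n/2⌋} Σ_{l=0}^{⌊m/2⌋} (−1)^l · P(n−2k, m−2l, p) · Q(k, l, p). -/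
/-! Both sides count, with sign `(-1) ^ #S`, the pairs `(M, S)` of a partition `M` and a set
`S` of parts in `[1, p]` such that `M + 2 • S` is a partition of `n` into `m` parts at most `p`
(in generating functions: `∏ (1 + y xⁱ) = ∏ (1 - y² x²ⁱ) / (1 - y xⁱ)`). Grouping the pairs
by `T = M + 2 • S` instead, `S` ranges over all subsets of the parts repeated in `T`, so the
alternating sum over `S` vanishes unless the parts of `T` are distinct, and is `1` if they are. -/

open Finset

def partitionMultisets (n : ℕ) : Finset (Multiset ℕ) :=
  univ.map ⟨Nat.Partition.parts (n := n), fun _ _ ↦ Nat.Partition.ext⟩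

theorem mem_partitionMultisets {n : ℕ} {M : Multiset ℕ} :
    M ∈ partitionMultisets n ↔ (∀ i ∈ M, 0 < i) ∧ M.sum = n := by
  simp only [partitionMultisets, mem_map, mem_univ, true_and]
  exact ⟨by rintro ⟨π, rfl⟩; exact ⟨fun _ ↦ π.parts_pos, π.parts_sum⟩,
    fun ⟨hpos, hsum⟩ ↦ ⟨⟨M, hpos _, hsum⟩, rfl⟩⟩

theorem card_partition_subtype (n : ℕ) (R : Multiset ℕ → Prop) [DecidablePred R] :
    Fintype.card {π : n.Partition // R π.parts} = #{M ∈ partitionMultisets n | R M} := by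
  rw [Fintype.card_subtype, partitionMultisets, filter_map, card_map]
  rfl

def boundedPartitions (p n m : ℕ) : Finset (Multiset ℕ) :=
  {M ∈ partitionMultisets n | Multiset.card M = m ∧ ∀ i ∈ M, i ≤ p}

theorem mem_boundedPartitions {p n m : ℕ} {M : Multiset ℕ} :
    M ∈ boundedPartitions p n m ↔
      (∀ i ∈ M, 0 < i) ∧ M.sum = n ∧ Multiset.card M = m ∧ ∀ i ∈ M, i ≤ p := by
  rw [boundedPartitions, mem_filter, mem_partitionMultisets, and_assoc]

theorem P_eq_card (n m p : ℕ) : P n m p = #(boundedPartitions p n m) :=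
  card_partition_subtype n fun M ↦ Multiset.card M = m ∧ ∀ i ∈ M, i ≤ p

theorem Q_eq_card_filter_nodup (n m p : ℕ) :
    Q n m p = #{M ∈ boundedPartitions p n m | M.Nodup} := by
  rw [Q,
    card_partition_subtype n fun M ↦ Multiset.card M = m ∧ M.Nodup ∧ ∀ i ∈ M, i ≤ p,
    boundedPartitions, filter_filter]
  congr 1
  ext M
  simp only [mem_filter]
  tauto

def distinctPartSets (p n m : ℕ) : Finset (Finset ℕ) :=
  {S ∈ (Icc 1 p).powerset | ∑ i ∈ S, i = n ∧ #S = m}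

theorem Q_eq_card_distinctPartSets (n m p : ℕ) : Q n m p = #(distinctPartSets p n m) := by
  rw [Q_eq_card_filter_nodup]
  symm
  refine card_bij (fun S _ ↦ S.val) (fun S hS ↦ ?_) (fun _ _ _ _ ↦ Finset.val_inj.1)
    fun M hM ↦ ⟨⟨M, (mem_filter.1 hM).2⟩, ?_, rfl⟩
  · simp only [distinctPartSets, mem_filter, mem_powerset] at hS
    simp only [mem_filter, mem_boundedPartitions, S.nodup, and_true, Finset.mem_val]
    refine ⟨fun i hi ↦ (mem_Icc.1 (hS.1 hi)).1, ?_, ?_, fun i hi ↦ (mem_Icc.1 (hS.1 hi)).2⟩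
    · rw [Finset.sum_val]
      exact hS.2.1
    · exact hS.2.2
  · obtain ⟨hpos, hsum, hcard, hle⟩ := mem_boundedPartitions.1 (mem_filter.1 hM).1
    simp only [distinctPartSets, mem_filter, mem_powerset]
    refine ⟨fun i hi ↦ mem_Icc.2 ⟨hpos i hi, hle i hi⟩, ?_, hcard⟩
    exact (Finset.sum_val _).symm.trans hsum

section repeatedElems

variable {α : Type*} [DecidableEq α]

def repeatedElems (M : Multiset α) : Finset α := {a ∈ M.toFinset | 2 ≤ M.count a}

theorem mem_repeatedElems {M : Multiset α} {a : α} :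
    a ∈ repeatedElems M ↔ 2 ≤ M.count a := by
  rw [repeatedElems, mem_filter, Multiset.mem_toFinset, and_iff_right_iff_imp]
  intro h
  exact Multiset.count_pos.1 (by omega)

theorem repeatedElems_eq_empty_iff {M : Multiset α} : repeatedElems M = ∅ ↔ M.Nodup := by
  simp only [Finset.eq_empty_iff_forall_notMem, mem_repeatedElems, Multiset.nodup_iff_count_le_one]
  exact forall_congr' fun a ↦ by omega

theorem two_nsmul_val_le_iff_subset_repeatedElems {S : Finset α} {M : Multiset α} :
    2 • S.val ≤ M ↔ S ⊆ repeatedElems M := by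
  simp only [Multiset.le_iff_count, Multiset.count_nsmul, Finset.subset_iff, mem_repeatedElems]
  refine ⟨fun h a ha ↦ ?_, fun h a ↦ ?_⟩
  · simpa [Multiset.count_eq_one_of_mem S.nodup ha] using h a
  · by_cases ha : a ∈ S
    · simpa [Multiset.count_eq_one_of_mem S.nodup ha] using h ha
    · simp [Multiset.count_eq_zero_of_notMem ha]

theorem sum_powerset_repeatedElems_neg_one_pow (M : Multiset α) :
    ∑ S ∈ (repeatedElems M).powerset, (-1 : ℤ) ^ #S = if M.Nodup then 1 else 0 := by
  simp only [sum_powerset_neg_one_pow_card, repeatedElems_eq_empty_iff]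

end repeatedElems

section shift

def shiftSets (p n m : ℕ) : Finset (Finset ℕ) :=
  {S ∈ (Icc 1 p).powerset | 2 * ∑ i ∈ S, i ≤ n ∧ 2 * #S ≤ m}

variable {p n m : ℕ} {S : Finset ℕ} {M : Multiset ℕ}

theorem sum_nsmul_val (k : ℕ) : (k • S.val).sum = k * ∑ i ∈ S, i := by
  rw [Multiset.sum_nsmul, Finset.sum_val, smul_eq_mul]
  rfl

theorem add_two_nsmul_mem_boundedPartitions_iff (hS : S ∈ shiftSets p n m) :
    M + 2 • S.val ∈ boundedPartitions p n m ↔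
      M ∈ boundedPartitions p (n - 2 * ∑ i ∈ S, i) (m - 2 * #S) := by
  obtain ⟨hS, hn, hm⟩ := mem_filter.1 hS
  have hS' : ∀ i ∈ S, 0 < i ∧ i ≤ p := fun i hi ↦ mem_Icc.1 (mem_powerset.1 hS hi)
  simp only [mem_boundedPartitions, Multiset.mem_add, Multiset.sum_add, Multiset.card_add,
    sum_nsmul_val, Multiset.card_nsmul, Finset.card_val,
    Multiset.mem_nsmul_of_ne_zero two_ne_zero, Finset.mem_val]
  constructor
  · rintro ⟨hpos, hsum, hcard, hle⟩
    exact ⟨fun i hi ↦ hpos i (.inl hi), by omega, by omega, fun i hi ↦ hle i (.inl hi)⟩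
  · rintro ⟨hpos, hsum, hcard, hle⟩
    refine ⟨fun i hi ↦ ?_, by omega, by omega, fun i hi ↦ ?_⟩
    · exact hi.elim (hpos i) fun hi ↦ (hS' i hi).1
    · exact hi.elim (hle i) fun hi ↦ (hS' i hi).2

theorem mem_shiftSets_of_two_nsmul_le {T : Multiset ℕ}
    (hT : T ∈ boundedPartitions p n m) (h : 2 • S.val ≤ T) : S ∈ shiftSets p n m := by
  obtain ⟨M, rfl⟩ := Multiset.le_iff_exists_add.1 h
  simp only [mem_boundedPartitions, Multiset.mem_add, Multiset.sum_add, Multiset.card_add,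
    sum_nsmul_val, Multiset.card_nsmul, Finset.card_val,
    Multiset.mem_nsmul_of_ne_zero two_ne_zero, Finset.mem_val] at hT
  obtain ⟨hpos, hsum, hcard, hle⟩ := hT
  refine mem_filter.2 ⟨mem_powerset.2 fun i hi ↦ ?_, by omega, by omega⟩
  exact mem_Icc.2 ⟨hpos i (.inl hi), hle i (.inl hi)⟩

theorem card_boundedPartitions_sub (hS : S ∈ shiftSets p n m) :
    #(boundedPartitions p (n - 2 * ∑ i ∈ S, i) (m - 2 * #S)) =
      #{T ∈ boundedPartitions p n m | 2 • S.val ≤ T} := by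
  refine card_nbij' (· + 2 • S.val) (· - 2 • S.val) (fun M hM ↦ ?_) (fun T hT ↦ ?_)
    (fun M _ ↦ add_tsub_cancel_right M _) (fun T hT ↦ tsub_add_cancel_of_le (mem_filter.1 hT).2)
  · exact mem_filter.2 ⟨(add_two_nsmul_mem_boundedPartitions_iff hS).2 hM,
      Multiset.le_add_left _ _⟩
  · rw [Finset.mem_coe, mem_filter] at hT
    rw [Finset.mem_coe, ← add_two_nsmul_mem_boundedPartitions_iff hS, tsub_add_cancel_of_le hT.2]
    exact hT.1

end shift

theorem sum_neg_one_pow_mul_card_eq_sum_powerset_repeatedElems (p n m : ℕ) :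
    ∑ S ∈ shiftSets p n m,
        (-1 : ℤ) ^ #S * #{T ∈ boundedPartitions p n m | 2 • S.val ≤ T} =
      ∑ T ∈ boundedPartitions p n m, ∑ S ∈ (repeatedElems T).powerset, (-1 : ℤ) ^ #S := by
  simp_rw [mul_comm _ (#_ : ℤ), ← nsmul_eq_mul, ← sum_const]
  refine sum_comm' fun S T ↦ ?_
  rw [mem_filter, mem_powerset, ← two_nsmul_val_le_iff_subset_repeatedElems]
  exact ⟨fun ⟨_, hT, h⟩ ↦ ⟨h, hT⟩,
    fun ⟨h, hT⟩ ↦ ⟨mem_shiftSets_of_two_nsmul_le hT h, hT, h⟩⟩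

theorem sum_P_mul_Q_eq_sum_card_boundedPartitions (n m p : ℕ) :
    ∑ k ∈ range (n / 2 + 1), ∑ l ∈ range (m / 2 + 1),
        (-1 : ℤ) ^ l * P (n - 2 * k) (m - 2 * l) p * Q k l p =
      ∑ S ∈ shiftSets p n m,
        (-1 : ℤ) ^ #S * #(boundedPartitions p (n - 2 * ∑ i ∈ S, i) (m - 2 * #S)) := by
  rw [← sum_product' (f := fun k l ↦ (-1 : ℤ) ^ l * P (n - 2 * k) (m - 2 * l) p * Q k l p),
    ← sum_fiberwise_of_maps_to (g := fun S ↦ (∑ i ∈ S, i, #S))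
      (t := range (n / 2 + 1) ×ˢ range (m / 2 + 1)) fun S hS ↦ ?_]
  · refine sum_congr rfl fun ⟨k, l⟩ hkl ↦ ?_
    rw [mem_product, mem_range, mem_range] at hkl
    have hfiber :
        {S ∈ shiftSets p n m | (∑ i ∈ S, i, #S) = (k, l)} = distinctPartSets p k l := by
      ext S
      simp only [shiftSets, distinctPartSets, mem_filter, Prod.mk.injEq, and_assoc]
      exact and_congr_right fun _ ↦ by omega
    rw [hfiber, P_eq_card, Q_eq_card_distinctPartSets, sum_congr rfl fun S hS ↦ by
      obtain ⟨-, hsum, hcard⟩ := mem_filter.1 hS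
      rw [hsum, hcard], sum_const, nsmul_eq_mul]
    ring
  · simp only [shiftSets, mem_filter, mem_product, mem_range] at hS ⊢
    omega

theorem stmt_4 (n m p : ℕ) :
    (Q n m p : ℤ) = ∑ k ∈ Finset.range (n / 2 + 1), ∑ l ∈ Finset.range (m / 2 + 1),
      (-1 : ℤ) ^ l * P (n - 2 * k) (m - 2 * l) p * Q k l p := by
  rw [sum_P_mul_Q_eq_sum_card_boundedPartitions,
    sum_congr rfl fun S hS ↦ by rw [card_boundedPartitions_sub hS],
    sum_neg_one_pow_mul_card_eq_sum_powerset_repeatedElems, Q_eq_card_filter_nodup]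
  simp only [sum_powerset_repeatedElems_neg_one_pow, sum_boole]
end

section
/- For all nonnegative integers n, m, p, the following identity holds in ℝ: Σ_{k=0}^{⌊n/3⌋} Σ_{l=0}^{⌊m/3⌋} (−1)^l · Q(n−3k, m−3l, p) · P(k, l, p) = Σ_{k=0}^{n} Σ_{l=0}^{m} cos((2l−m)π/3) · P(n−k, m−l, p) · P(k, l, p). -/
/-!
Write `y_i = x q^i`. The generating function of `P(n, m, p)` (with `x` marking the number of parts
and `q` the size) is `∏_{i ≤ p} (1 - y_i)⁻¹`, and that of `Q(n, m, p)` is `∏_{i ≤ p} (1 + y_i)`;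
both follow from the recursions in `p` obtained by removing one part equal to `p`. For
`ω = e^{iπ/3}` we have `ω + ω̄ = 1 = ω ω̄`, so `(1 - ω y)(1 - ω̄ y)(1 + y) = 1 + y³`. Hence
`G(ω x) G(ω̄ x) = G(-x³)|_{q ↦ q³} · ∏ (1 + y_i)`, where `G(x)` is the generating function of
`P`. Comparing coefficients of `x^m q^n` and taking real parts (`ω^l ω̄^{m-l} = e^{i(2l-m)π/3}`)
gives the identity.
-/

theorem Nat.card_subtype_eq_card_and_not_add {α : Type*} [Finite α] (R T : α → Prop) :
    Nat.card {x // R x} = Nat.card {x // R x ∧ ¬ T x} + Nat.card {x // T x ∧ R x} := by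
  classical
  rw [← Nat.card_sum]
  refine Nat.card_congr <|
    (Equiv.sumCompl fun x : {x // R x} => ¬ T x).symm.trans (Equiv.sumCongr ?_ ?_)
  · exact Equiv.subtypeSubtypeEquivSubtypeInter (fun x => R x) (fun x => ¬ T x)
  · exact Equiv.subtypeSubtypeEquivSubtypeInter (fun x => R x) (fun x => ¬ ¬ T x) |>.trans
      (Equiv.subtypeEquivRight fun _ => by rw [not_not, and_comm])

theorem Nat.Partition.card_mem_parts_and {a s : ℕ} (hs : 1 ≤ s) (hsa : s ≤ a)
    (S : Multiset ℕ → Prop) :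
    Nat.card {π : a.Partition // s ∈ π.parts ∧ S π.parts}
      = Nat.card {σ : (a - s).Partition // S (s ::ₘ σ.parts)} :=
  Nat.card_congr <| (Equiv.subtypeSubtypeEquivSubtypeInter _ _).symm.trans <|
    (partitionWithPartEquiv hs hsa).subtypeEquiv fun π => by
      rw [partitionWithPartEquiv_apply_parts, Multiset.cons_erase π.2]

theorem Nat.Partition.card_mem_parts_and_card_eq {a s : ℕ} (hs : 1 ≤ s) (b : ℕ)
    (S : Multiset ℕ → Prop) :
    Nat.card {π : a.Partition // s ∈ π.parts ∧ π.parts.card = b ∧ S π.parts}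
      = if s ≤ a then
          if 1 ≤ b then Nat.card {σ : (a - s).Partition // σ.parts.card = b - 1 ∧ S (s ::ₘ σ.parts)}
          else 0
        else 0 := by
  split_ifs with hsa hb
  · refine (card_mem_parts_and hs hsa fun m => m.card = b ∧ S m).trans <|
      Nat.card_congr <| Equiv.subtypeEquivRight fun σ => ?_
    rw [Multiset.card_cons]
    exact and_congr_left' (by omega)
  · rw [Nat.card_eq_zero]
    refine .inl ⟨fun ⟨π, hmem, hcard, _⟩ => ?_⟩
    have := Multiset.card_pos_iff_exists_mem.2 ⟨s, hmem⟩
    omega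
  · rw [Nat.card_eq_zero]
    exact .inl ⟨fun ⟨π, hmem, _⟩ => hsa (le_of_mem_parts hmem)⟩

theorem Nat.Partition.parts_eq_zero_of_forall_le_zero {a : ℕ} {π : a.Partition}
    (h : ∀ i ∈ π.parts, i ≤ 0) : π.parts = 0 :=
  Multiset.eq_zero_of_forall_notMem fun i hi => (π.parts_pos hi).ne' (Nat.le_zero.1 (h i hi))

theorem P_zero (a b : ℕ) : P a b 0 = if a = 0 ∧ b = 0 then 1 else 0 := by
  rw [P, ← Nat.card_eq_fintype_card]
  split_ifs with h
  · obtain ⟨rfl, rfl⟩ := h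
    exact Nat.card_eq_one_iff_unique.2 ⟨inferInstance, ⟨⟨default, by simp⟩⟩⟩
  · rw [Nat.card_eq_zero]
    refine .inl ⟨fun ⟨π, hb, hle⟩ => h ?_⟩
    have h0 := Nat.Partition.parts_eq_zero_of_forall_le_zero hle
    exact ⟨by simpa [h0] using π.parts_sum.symm, by simpa [h0] using hb.symm⟩

theorem Q_zero (a b : ℕ) : Q a b 0 = if a = 0 ∧ b = 0 then 1 else 0 := by
  rw [Q, ← Nat.card_eq_fintype_card]
  split_ifs with h
  · obtain ⟨rfl, rfl⟩ := h
    exact Nat.card_eq_one_iff_unique.2 ⟨inferInstance, ⟨⟨default, by simp⟩⟩⟩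
  · rw [Nat.card_eq_zero]
    refine .inl ⟨fun ⟨π, hb, _, hle⟩ => h ?_⟩
    have h0 := Nat.Partition.parts_eq_zero_of_forall_le_zero hle
    exact ⟨by simpa [h0] using π.parts_sum.symm, by simpa [h0] using hb.symm⟩

theorem Multiset.forall_le_succ_and_notMem_iff {m : Multiset ℕ} {p : ℕ} :
    ((∀ i ∈ m, i ≤ p + 1) ∧ p + 1 ∉ m) ↔ ∀ i ∈ m, i ≤ p :=
  ⟨fun ⟨hle, hp⟩ i hi => Nat.le_of_lt_succ <| (hle i hi).lt_of_ne (by rintro rfl; exact hp hi),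
    fun hle => ⟨fun i hi => (hle i hi).trans p.le_succ, fun hp => (hle _ hp).not_gt p.lt_succ_self⟩⟩

theorem P_succ (a b p : ℕ) :
    P a b (p + 1) = P a b p +
      if p + 1 ≤ a then (if 1 ≤ b then P (a - (p + 1)) (b - 1) (p + 1) else 0) else 0 := by
  simp only [P, ← Nat.card_eq_fintype_card]
  rw [Nat.card_subtype_eq_card_and_not_add _ fun π : a.Partition => p + 1 ∈ π.parts,
    Nat.Partition.card_mem_parts_and_card_eq (Nat.le_add_left 1 p) b
      fun m => ∀ i ∈ m, i ≤ p + 1]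
  congr 1
  · exact Nat.card_congr <| Equiv.subtypeEquivRight fun π => by
      rw [and_assoc, Multiset.forall_le_succ_and_notMem_iff]
  · simp

theorem Q_succ (a b p : ℕ) :
    Q a b (p + 1) = Q a b p +
      if p + 1 ≤ a then (if 1 ≤ b then Q (a - (p + 1)) (b - 1) p else 0) else 0 := by
  simp only [Q, ← Nat.card_eq_fintype_card]
  rw [Nat.card_subtype_eq_card_and_not_add _ fun π : a.Partition => p + 1 ∈ π.parts,
    Nat.Partition.card_mem_parts_and_card_eq (Nat.le_add_left 1 p) b
      fun m => m.Nodup ∧ ∀ i ∈ m, i ≤ p + 1]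
  congr 1
  · exact Nat.card_congr <| Equiv.subtypeEquivRight fun π => by
      rw [and_assoc, and_assoc, Multiset.forall_le_succ_and_notMem_iff]
  · congr 2
    refine Nat.card_congr <| Equiv.subtypeEquivRight fun σ => ?_
    rw [Multiset.nodup_cons, ← Multiset.forall_le_succ_and_notMem_iff (m := σ.parts)]
    simp only [Multiset.mem_cons, forall_eq_or_imp, le_refl, true_and]
    tauto

open PowerSeries Finset

theorem PowerSeries.coeff_expand_mul_eq_sum {R : Type*} [CommRing R] (q : ℕ) (hq : q ≠ 0)
    (f g : R⟦X⟧) (n : ℕ) :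
    coeff n (expand q hq f * g) = ∑ k ∈ range (n / q + 1), coeff k f * coeff (n - q * k) g := by
  have hsub : (range (n / q + 1)).image (q * ·) ⊆ range (n + 1) := by
    intro i
    simp only [mem_image, mem_range]
    rintro ⟨k, hk, rfl⟩
    have := (Nat.le_div_iff_mul_le (Nat.pos_of_ne_zero hq)).1 (Nat.lt_succ_iff.1 hk)
    linarith
  rw [coeff_mul, Nat.sum_antidiagonal_eq_sum_range_succ_mk, ← sum_subset hsub,
    sum_image fun _ _ _ _ h => Nat.eq_of_mul_eq_mul_left (Nat.pos_of_ne_zero hq) h]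
  · simp only [coeff_expand_mul]
  · intro i hin hi
    rw [coeff_expand_of_not_dvd q hq f, zero_mul]
    rintro ⟨k, rfl⟩
    refine hi (mem_image.2 ⟨k, mem_range.2 (Nat.lt_succ_of_le ?_), rfl⟩)
    rw [Nat.le_div_iff_mul_le (Nat.pos_of_ne_zero hq), mul_comm]
    exact Nat.lt_succ_iff.1 (mem_range.1 hin)

theorem PowerSeries.coeff_coeff_mul {R : Type*} [CommRing R] (f g : R⟦X⟧⟦X⟧) (n m : ℕ) :
    coeff m (coeff n (f * g)) = ∑ k ∈ range (n + 1), ∑ l ∈ range (m + 1),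
      coeff l (coeff k f) * coeff (m - l) (coeff (n - k) g) := by
  simp only [coeff_mul, map_sum, Nat.sum_antidiagonal_eq_sum_range_succ_mk]

section GeneratingFunctions

variable (R : Type*) [CommRing R]

-- The outer variable `q` records the size of a partition, the inner one `x` its number of parts.
noncomputable def partitionGF (p : ℕ) : R⟦X⟧⟦X⟧ := mk fun a => mk fun b => (P a b p : R)

noncomputable def distinctPartitionGF (p : ℕ) : R⟦X⟧⟦X⟧ := mk fun a => mk fun b => (Q a b p : R)

variable {R}

theorem coeff_coeff_C_X_mul_X_pow_mul (j a b : ℕ) (f : R⟦X⟧⟦X⟧) :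
    coeff b (coeff a (C X * X ^ j * f)) =
      if j ≤ a then (if 1 ≤ b then coeff (b - 1) (coeff (a - j) f) else 0) else 0 := by
  rw [mul_comm (C X), mul_assoc, coeff_X_pow_mul', coeff_C_mul]
  split_ifs <;> rcases b with _ | b <;> simp_all [coeff_succ_X_mul]

theorem partitionGF_zero : partitionGF R 0 = 1 := by
  ext a b : 2
  rw [partitionGF, coeff_mk, coeff_mk, P_zero, coeff_one]
  split_ifs <;> simp_all

theorem partitionGF_succ (p : ℕ) :
    partitionGF R (p + 1) = partitionGF R p + C X * X ^ (p + 1) * partitionGF R (p + 1) := by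
  ext a b : 2
  rw [map_add, map_add, coeff_coeff_C_X_mul_X_pow_mul]
  simp only [partitionGF, coeff_mk]
  rw [P_succ]
  split_ifs <;> simp

theorem partitionGF_mul_prod (p : ℕ) :
    partitionGF R p * ∏ i ∈ range p, (1 - C X * X ^ (i + 1)) = 1 := by
  induction p with
  | zero => rw [partitionGF_zero, prod_range_zero, one_mul]
  | succ p ih =>
    rw [prod_range_succ]
    linear_combination
      (∏ i ∈ range p, (1 - C X * X ^ (i + 1))) * partitionGF_succ (R := R) p + ih

theorem distinctPartitionGF_eq_prod (p : ℕ) :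
    distinctPartitionGF R p = ∏ i ∈ range p, (1 + C X * X ^ (i + 1)) := by
  induction p with
  | zero =>
    ext a b : 2
    rw [distinctPartitionGF, coeff_mk, coeff_mk, Q_zero, prod_range_zero, coeff_one]
    split_ifs <;> simp_all
  | succ p ih =>
    rw [prod_range_succ, ← ih, mul_add, mul_one, mul_comm]
    ext a b : 2
    rw [map_add, map_add, coeff_coeff_C_X_mul_X_pow_mul]
    simp only [distinctPartitionGF, coeff_mk]
    rw [Q_succ]
    split_ifs <;> simp

noncomputable def expandBoth (q : ℕ) (hq : q ≠ 0) : R⟦X⟧⟦X⟧ →+* R⟦X⟧⟦X⟧ :=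
  (expand q hq (R := R⟦X⟧) : R⟦X⟧⟦X⟧ →+* R⟦X⟧⟦X⟧).comp (map (expand q hq (R := R)))

theorem expandBoth_C_C_mul (q : ℕ) (hq : q ≠ 0) (c : R) (f : R⟦X⟧⟦X⟧) :
    expandBoth q hq (C (C c) * f) = C (C c) * expandBoth q hq f := by
  simp [expandBoth, expand_C]

theorem expandBoth_C_X_mul_X_pow (q : ℕ) (hq : q ≠ 0) (j : ℕ) :
    expandBoth q hq (C X * X ^ j : R⟦X⟧⟦X⟧) = (C X * X ^ j) ^ q := by
  simp only [expandBoth, RingHom.coe_comp, RingHom.coe_coe, Function.comp_apply, map_mul, map_C,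
    map_pow, map_X, expand_X, expand_C]
  ring

theorem map_rescale_C_X_mul_X_pow (c : R) (j : ℕ) :
    map (rescale c) (C X * X ^ j : R⟦X⟧⟦X⟧) = C (C c) * (C X * X ^ j) := by
  simp only [map_mul, map_C, rescale_X, map_pow, map_X]
  ring

theorem mul_eq_mul_of_mul_eq_one {A : Type*} [CommRing A] {a b c d u v w : A} (ha : a * u = 1)
    (hb : b * v = 1) (hc : c * w = 1) (h : u * v * d = w) : a * b = c * d := by
  linear_combination (-(a * b)) * hc - (a * b * c) * h + (c * d * b * v) * ha + (c * d) * hb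

theorem map_rescale_mul_map_rescale_partitionGF {z e : R} (hs : z + e = 1) (hm : z * e = 1)
    (p : ℕ) :
    map (rescale z) (partitionGF R p) * map (rescale e) (partitionGF R p) =
      expandBoth 3 three_ne_zero (map (rescale (-1)) (partitionGF R p)) *
        distinctPartitionGF R p := by
  have hinv (ψ : R⟦X⟧⟦X⟧ →+* R⟦X⟧⟦X⟧) :
      ψ (partitionGF R p) * ∏ i ∈ range p, (1 - ψ (C X * X ^ (i + 1))) = 1 := by
    simpa [map_prod] using congrArg ψ (partitionGF_mul_prod p)
  have hz := hinv (map (rescale z))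
  have he := hinv (map (rescale e))
  have h3 := hinv ((expandBoth 3 three_ne_zero).comp (map (rescale (-1))))
  simp only [RingHom.comp_apply, map_rescale_C_X_mul_X_pow, expandBoth_C_C_mul,
    expandBoth_C_X_mul_X_pow] at hz he h3
  have hfactor : (∏ i ∈ range p, (1 - C (C z) * (C X * X ^ (i + 1)))) *
      (∏ i ∈ range p, (1 - C (C e) * (C X * X ^ (i + 1)))) * distinctPartitionGF R p =
      ∏ i ∈ range p, (1 - C (C (-1)) * (C X * X ^ (i + 1)) ^ 3) := by
    rw [distinctPartitionGF_eq_prod, ← prod_mul_distrib, ← prod_mul_distrib]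
    refine prod_congr rfl fun i _ => ?_
    have hs' : C (C z) + C (C e) = (1 : R⟦X⟧⟦X⟧) := by
      rw [← map_add, ← map_add, hs, map_one, map_one]
    have hm' : C (C z) * C (C e) = (1 : R⟦X⟧⟦X⟧) := by
      rw [← map_mul, ← map_mul, hm, map_one, map_one]
    rw [map_neg, map_neg, map_one, map_one]
    linear_combination (-(C X * X ^ (i + 1)) - (C X * X ^ (i + 1)) ^ 2) * hs' +
      ((C X * X ^ (i + 1)) ^ 2 + (C X * X ^ (i + 1)) ^ 3) * hm'
  exact mul_eq_mul_of_mul_eq_one hz he h3 hfactor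

theorem sum_Q_mul_P_eq_sum_P_mul_P {z e : R} (hs : z + e = 1) (hm : z * e = 1) (n m p : ℕ) :
    ∑ k ∈ range (n / 3 + 1), ∑ l ∈ range (m / 3 + 1),
      (-1 : R) ^ l * Q (n - 3 * k) (m - 3 * l) p * P k l p =
    ∑ k ∈ range (n + 1), ∑ l ∈ range (m + 1),
      z ^ l * e ^ (m - l) * P (n - k) (m - l) p * P k l p := by
  have h := congrArg (fun f => coeff m (coeff n f))
    (map_rescale_mul_map_rescale_partitionGF hs hm p)
  simp only [coeff_coeff_mul, expandBoth, RingHom.comp_apply, RingHom.coe_coe,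
    coeff_expand_mul_eq_sum, map_sum, coeff_map, coeff_rescale, partitionGF, distinctPartitionGF,
    coeff_mk] at h
  refine (sum_congr rfl fun k _ => sum_congr rfl fun l _ => ?_).trans
    (h.symm.trans (sum_congr rfl fun k _ => sum_congr rfl fun l _ => ?_)) <;> ring

end GeneratingFunctions

theorem stmt_6 (n m p : ℕ) :
    ∑ k ∈ Finset.range (n / 3 + 1), ∑ l ∈ Finset.range (m / 3 + 1),
      (-1 : ℝ) ^ l * Q (n - 3 * k) (m - 3 * l) p * P k l p
    = ∑ k ∈ Finset.range (n + 1), ∑ l ∈ Finset.range (m + 1),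
      Real.cos ((2 * (l : ℝ) - m) * Real.pi / 3) * P (n - k) (m - l) p * P k l p := by
  set z := Complex.exp (↑(Real.pi / 3) * Complex.I)
  set e := Complex.exp (-↑(Real.pi / 3) * Complex.I)
  have hs : z + e = 1 := by
    rw [← Complex.two_cos, ← Complex.ofReal_cos, Real.cos_pi_div_three]
    norm_num
  have hm : z * e = 1 := by
    rw [← Complex.exp_add, ← add_mul, add_neg_cancel, zero_mul, Complex.exp_zero]
  have hpow {l : ℕ} (hl : l ≤ m) :
      z ^ l * e ^ (m - l) = Complex.exp (↑((2 * (l : ℝ) - m) * Real.pi / 3) * Complex.I) := by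
    rw [← Complex.exp_nat_mul, ← Complex.exp_nat_mul, ← Complex.exp_add, Nat.cast_sub hl]
    push_cast
    ring_nf
  calc
    _ = (∑ k ∈ range (n + 1), ∑ l ∈ range (m + 1),
          z ^ l * e ^ (m - l) * P (n - k) (m - l) p * P k l p).re := by
      rw [← sum_Q_mul_P_eq_sum_P_mul_P hs hm]
      norm_cast
    _ = _ := by
      simp only [Complex.re_sum]
      refine sum_congr rfl fun k _ => sum_congr rfl fun l hl => ?_
      rw [hpow (Nat.lt_succ_iff.1 (mem_range.1 hl))]
      simp only [mul_assoc, ← Complex.ofReal_natCast, ← Complex.ofReal_mul, Complex.re_mul_ofReal,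
        Complex.exp_ofReal_mul_I_re]
end

section
/- For all nonnegative integers n and m, the following identity holds in ℚ(q): Σ_{k=0}^{⌊n/2⌋} q^{C(n−2k,2)} · [m+1 choose n−2k]_q · [m+k choose m]_{q^2} = [m+n choose m]_q. -/
/-- The Gaussian (q-)binomial coefficient `[a choose b]` with parameter `x`,
`∏_{j=1}^{b} (1 - x^{a-b+j})/(1 - x^j)`, an element of `ℚ(q)` when `x = q`;
it is zero when `b > a`. -/
noncomputable def qbinom (x : RatFunc ℚ) (a b : ℕ) : RatFunc ℚ :=
  if b ≤ a then ∏ j ∈ Finset.range b, (1 - x ^ (a - b + j + 1)) / (1 - x ^ (j + 1)) else 0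

/-- The indeterminate `q` of the field of rational functions `ℚ(q)`. -/
noncomputable def q : RatFunc ℚ := RatFunc.X

/-
Generating functions. The q-binomial theorem gives
`∏_{i ≤ m} (1 + q^i t) = ∑_d q^(d choose 2) [m+1 choose d]_q t^d`, and
`∑_n [m+n choose m]_x t^n = 1 / ∏_{i ≤ m} (1 - x^i t)`.
As `(1 + q^i t)(1 - q^i t) = 1 - q^(2i) t^2`, the second series at `x = q^2`, `t ↦ t^2`, times the
first product equals the second series at `x = q`; comparing coefficients of `t^n` is the identity.
-/

open Finset hiding mk
open PowerSeries

lemma q_pow_ne_one {i : ℕ} (hi : i ≠ 0) : q ^ i ≠ 1 := by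
  intro h
  have : (Polynomial.X : Polynomial ℚ) ^ i = 1 :=
    RatFunc.algebraMap_injective ℚ (by simpa [q, RatFunc.algebraMap_X] using h)
  simpa [hi] using congrArg Polynomial.natDegree this

noncomputable def qfactorial (x : RatFunc ℚ) (n : ℕ) : RatFunc ℚ :=
  ∏ j ∈ range n, (1 - x ^ (j + 1))

section

variable {x : RatFunc ℚ}

lemma one_sub_pow_ne_zero (hx : ∀ i ≠ 0, x ^ i ≠ 1) (n : ℕ) :
    1 - x ^ (n + 1) ≠ 0 :=
  sub_ne_zero.2 (hx (n + 1) n.succ_ne_zero).symm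

lemma qfactorial_succ (n : ℕ) :
    qfactorial x (n + 1) = qfactorial x n * (1 - x ^ (n + 1)) :=
  prod_range_succ _ _

lemma qfactorial_ne_zero (hx : ∀ i ≠ 0, x ^ i ≠ 1) (n : ℕ) :
    qfactorial x n ≠ 0 :=
  prod_ne_zero_iff.2 fun j _ => one_sub_pow_ne_zero hx j

lemma qbinom_zero_right (a : ℕ) : qbinom x a 0 = 1 := by
  simp [qbinom]

lemma qbinom_of_lt {a b : ℕ} (h : a < b) : qbinom x a b = 0 := by
  simp [qbinom, Nat.not_le.2 h]

lemma qbinom_add_eq_div_qfactorial (hx : ∀ i ≠ 0, x ^ i ≠ 1) (b c : ℕ) :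
    qbinom x (c + b) b = qfactorial x (c + b) / (qfactorial x b * qfactorial x c) := by
  rw [qbinom, if_pos (Nat.le_add_left b c), Nat.add_sub_cancel, prod_div_distrib,
    qfactorial, prod_range_add, ← qfactorial, ← qfactorial]
  have := qfactorial_ne_zero hx c
  field_simp

lemma qbinom_self (hx : ∀ i ≠ 0, x ^ i ≠ 1) (a : ℕ) : qbinom x a a = 1 := by
  simpa [show qfactorial x 0 = 1 from prod_range_zero _, qfactorial_ne_zero hx] using
    qbinom_add_eq_div_qfactorial hx a 0

lemma qbinom_succ_succ (hx : ∀ i ≠ 0, x ^ i ≠ 1) (a b : ℕ) :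
    qbinom x (a + 1) (b + 1) = qbinom x a b + x ^ (b + 1) * qbinom x a (b + 1) := by
  rcases lt_trichotomy a b with hab | rfl | hba
  · rw [qbinom_of_lt hab, qbinom_of_lt (by omega), qbinom_of_lt (by omega)]
    ring
  · rw [qbinom_self hx, qbinom_self hx, qbinom_of_lt (by omega)]
    ring
  · obtain ⟨c, rfl⟩ : ∃ c, a = c + 1 + b := ⟨a - b - 1, by omega⟩
    rw [show c + 1 + b + 1 = (c + 1) + (b + 1) by ring, qbinom_add_eq_div_qfactorial hx,
      show c + 1 + b = c + (b + 1) by ring, qbinom_add_eq_div_qfactorial hx,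
      show c + (b + 1) = (c + 1) + b by ring, qbinom_add_eq_div_qfactorial hx]
    have := qfactorial_ne_zero hx b
    have := qfactorial_ne_zero hx c
    have := one_sub_pow_ne_zero hx b
    have := one_sub_pow_ne_zero hx c
    rw [show c + 1 + (b + 1) = c + 1 + b + 1 by ring, qfactorial_succ (c + 1 + b),
      qfactorial_succ b, qfactorial_succ c]
    field_simp
    ring

lemma qbinom_succ_succ' (hx : ∀ i ≠ 0, x ^ i ≠ 1) (b c : ℕ) :
    qbinom x (c + b + 1) (b + 1) = qbinom x (c + b) (b + 1) + x ^ c * qbinom x (c + b) b := by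
  cases c with
  | zero =>
    rw [Nat.zero_add, qbinom_self hx, qbinom_self hx, qbinom_of_lt (by omega)]
    ring
  | succ c =>
    rw [show c + 1 + b + 1 = (c + 1) + (b + 1) by ring, qbinom_add_eq_div_qfactorial hx,
      show c + 1 + b = c + (b + 1) by ring, qbinom_add_eq_div_qfactorial hx,
      show c + (b + 1) = (c + 1) + b by ring, qbinom_add_eq_div_qfactorial hx]
    have := qfactorial_ne_zero hx b
    have := qfactorial_ne_zero hx c
    have := one_sub_pow_ne_zero hx b
    have := one_sub_pow_ne_zero hx c
    rw [show c + 1 + (b + 1) = c + 1 + b + 1 by ring, qfactorial_succ (c + 1 + b),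
      qfactorial_succ b, qfactorial_succ c]
    field_simp
    ring

theorem prod_one_add_C_mul_X_eq_mk (hx : ∀ i ≠ 0, x ^ i ≠ 1) (a : ℕ) :
    ∏ i ∈ range a, (1 + C (x ^ i) * X) = mk fun d => x ^ d.choose 2 * qbinom x a d := by
  induction a with
  | zero =>
    ext (_ | d) <;> simp [qbinom_zero_right, qbinom_of_lt, coeff_one]
  | succ a ih =>
    rw [prod_range_succ, ih]
    ext (_ | d)
    · simp [qbinom_zero_right]
    rw [mul_add, mul_one, mul_left_comm, map_add, coeff_C_mul, coeff_succ_mul_X]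
    simp only [coeff_mk, Nat.choose_succ_succ' d 1, Nat.choose_one_right]
    rcases le_or_gt d a with hda | had
    · obtain ⟨c, rfl⟩ := Nat.exists_eq_add_of_le' hda
      rw [qbinom_succ_succ' hx]
      ring
    · rw [qbinom_of_lt (by omega), qbinom_of_lt had, qbinom_of_lt (by omega)]
      ring

lemma mk_qbinom_mul_one_sub_C_mul_X (hx : ∀ i ≠ 0, x ^ i ≠ 1) (a : ℕ) :
    (mk fun n => qbinom x (a + 1 + n) (a + 1)) * (1 - C (x ^ (a + 1)) * X) =
      mk fun n => qbinom x (a + n) a := by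
  ext (_ | n)
  · simp [qbinom_self hx]
  rw [mul_sub, mul_one, mul_left_comm, map_sub, coeff_C_mul, coeff_succ_mul_X]
  simp only [coeff_mk]
  rw [show a + 1 + (n + 1) = a + n + 1 + 1 by ring, qbinom_succ_succ hx,
    show a + 1 + n = a + n + 1 by ring, ← add_assoc]
  ring

theorem mk_qbinom_mul_prod_one_sub_C_mul_X (hx : ∀ i ≠ 0, x ^ i ≠ 1) (a : ℕ) :
    (mk fun n => qbinom x (a + n) a) * ∏ i ∈ range (a + 1), (1 - C (x ^ i) * X) = 1 := by
  induction a with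
  | zero =>
    convert mk_one_mul_one_sub_eq_one (RatFunc ℚ) using 2
    · ext n
      simp [qbinom_zero_right]
    · simp
  | succ a ih =>
    rw [prod_range_succ, ← mul_assoc, mul_right_comm, mk_qbinom_mul_one_sub_C_mul_X hx, ih]

end

theorem coeff_mul_expand {R : Type*} [CommRing R] (p : ℕ) (hp : p ≠ 0) (φ ψ : R⟦X⟧)
    (n : ℕ) :
    coeff n (ψ * expand p hp φ) =
      ∑ k ∈ range (n / p + 1), coeff (n - p * k) ψ * coeff k φ := by
  rw [mul_comm, coeff_mul, Nat.sum_antidiagonal_eq_sum_range_succ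
    (fun i j => coeff i (expand p hp φ) * coeff j ψ)]
  simp only [coeff_expand]
  set g : ℕ → R := fun i => (if p ∣ i then coeff (i / p) φ else 0) * coeff (n - i) ψ
  have hp0 : 0 < p := Nat.pos_of_ne_zero hp
  have hinj : Set.InjOn (p * ·) (range (n / p + 1) : Set ℕ) :=
    fun i _ j _ h => Nat.eq_of_mul_eq_mul_left hp0 h
  have hsub : (range (n / p + 1)).image (p * ·) ⊆ range (n + 1) := by
    intro i hi
    obtain ⟨k, hk, rfl⟩ := mem_image.1 hi
    have := (Nat.le_div_iff_mul_le hp0).1 (Nat.lt_succ_iff.1 (mem_range.1 hk))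
    exact mem_range.2 (by linarith [mul_comm k p])
  have hzero : ∀ i ∈ range (n + 1), i ∉ (range (n / p + 1)).image (p * ·) → g i = 0 := by
    intro i hi hni
    simp only [g, ite_mul, zero_mul, ite_eq_right_iff]
    rintro ⟨k, rfl⟩
    refine absurd (mem_image.2 ⟨k, mem_range.2 (Nat.lt_succ_iff.2 ?_), rfl⟩) hni
    exact (Nat.le_div_iff_mul_le hp0).2 (by linarith [mem_range.1 hi, mul_comm k p])
  calc ∑ i ∈ range (n + 1), g i
      = ∑ i ∈ (range (n / p + 1)).image (p * ·), g i := (sum_subset hsub hzero).symm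
    _ = ∑ k ∈ range (n / p + 1), g (p * k) := sum_image hinj
    _ = _ := sum_congr rfl fun k _ => by simp [g, hp, mul_comm]

section

variable {x : RatFunc ℚ}

theorem prod_one_add_C_mul_X_mul_expand_eq_mk (hx : ∀ i ≠ 0, x ^ i ≠ 1) (m : ℕ) :
    (∏ i ∈ range (m + 1), (1 + C (x ^ i) * X)) *
        expand 2 two_ne_zero (mk fun k => qbinom (x ^ 2) (m + k) m) =
      mk fun n => qbinom x (m + n) m := by
  set P := ∏ i ∈ range (m + 1), (1 + C (x ^ i) * X)
  set G := expand 2 two_ne_zero (mk fun k => qbinom (x ^ 2) (m + k) m)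
  set F : (RatFunc ℚ)⟦X⟧ := mk fun n => qbinom x (m + n) m
  have hx2 : ∀ i ≠ 0, (x ^ 2) ^ i ≠ 1 := fun i hi => by
    rw [← pow_mul]
    exact hx _ (by omega)
  have hG := congrArg (expand 2 two_ne_zero) (mk_qbinom_mul_prod_one_sub_C_mul_X hx2 m)
  simp only [map_mul, map_one, map_prod, map_sub, expand_C, expand_X] at hG
  have hfactor : ∏ i ∈ range (m + 1), (1 - C ((x ^ 2) ^ i) * X ^ 2) =
      P * ∏ i ∈ range (m + 1), (1 - C (x ^ i) * X) := by
    rw [← prod_mul_distrib]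
    refine prod_congr rfl fun i _ => ?_
    rw [← pow_mul, mul_comm 2 i, pow_mul, map_pow]
    ring
  rw [hfactor] at hG
  have hF := mk_qbinom_mul_prod_one_sub_C_mul_X hx m
  linear_combination F * hG - P * G * hF

end

theorem stmt_12 (n m : ℕ) :
    ∑ k ∈ Finset.range (n / 2 + 1),
      q ^ Nat.choose (n - 2 * k) 2 * qbinom q (m + 1) (n - 2 * k) * qbinom (q ^ 2) (m + k) m
    = qbinom q (m + n) m := by
  have hq : ∀ i ≠ 0, q ^ i ≠ 1 := fun _ => q_pow_ne_one
  have h := congrArg (coeff n) (prod_one_add_C_mul_X_mul_expand_eq_mk hq m)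
  rw [coeff_mul_expand, prod_one_add_C_mul_X_eq_mk hq] at h
  simpa only [coeff_mk] using h
end
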